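/- arXiv:1406.2289 — 3 statements merged into one kernel-verified Lean document; each statement's English description precedes it below -/
import Mathlib

section
/- Sharp Sobolev / energy trapping, first part: let d ≥ 3 and suppose u ∈ Ḣ¹(ℝᵈ) satisfies ‖u‖_{L^{2d/(d−2)}} ≤ C_d ‖∇u‖_{L²} (the sharp Sobolev inequality with constant attained by W), E_Δ(u) ≤ (1−δ₀)E_Δ(W) for some δ₀ ∈ (0,1], and ‖∇u‖_{L²} ≤ ‖∇W‖_{L²}. Then E_Δ(u) ≥ 0 and there exists δ₁ > 0 depending only on δ₀ and d with ‖∇u‖_{L²} ≤ (1−δ₁)‖∇W‖_{L²}. -/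
/-- Energy trapping, first part. Abstract reals: `Gu = ‖∇u‖₂`, `GW = ‖∇W‖₂`,
`Eu ≥ f(Gu²)` encodes `E_Δ(u) ≥ f(‖∇u‖²)` (sharp Sobolev), `EW = f(GW²)` and
the criticality of `GW²` encode the variational characterization of `W`, where
`f(y) = y/2 − (1−2/d) C_d^{2d/(d−2)} y^{d/(d−2)}`. If `Eu ≤ (1−δ₀)EW` and
`Gu ≤ GW`, then `Eu ≥ 0` and `Gu ≤ (1−δ₁)GW` with `δ₁ > 0` depending only on
`δ₀` and `d`. -/
theorem energy_trapping_first (d : ℕ) (hd : 3 ≤ d) (δ₀ : ℝ) (hδ₀ : 0 < δ₀)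
    (hδ₀' : δ₀ ≤ 1) :
    ∃ δ₁ > (0:ℝ), ∀ Cd Gu GW Eu EW : ℝ, 0 < Cd → 0 ≤ Gu → 0 < GW →
      (Gu ^ 2 / 2 - (1 - 2 / (d:ℝ)) * Cd ^ (2 * (d:ℝ) / ((d:ℝ) - 2))
          * (Gu ^ 2) ^ ((d:ℝ) / ((d:ℝ) - 2)) ≤ Eu) →
      (EW = GW ^ 2 / 2 - (1 - 2 / (d:ℝ)) * Cd ^ (2 * (d:ℝ) / ((d:ℝ) - 2))
          * (GW ^ 2) ^ ((d:ℝ) / ((d:ℝ) - 2))) →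
      ((1:ℝ) / 2 = (1 - 2 / (d:ℝ)) * Cd ^ (2 * (d:ℝ) / ((d:ℝ) - 2))
          * ((d:ℝ) / ((d:ℝ) - 2)) * (GW ^ 2) ^ ((d:ℝ) / ((d:ℝ) - 2) - 1)) →
      Eu ≤ (1 - δ₀) * EW →
      Gu ≤ GW →
      0 ≤ Eu ∧ Gu ≤ (1 - δ₁) * GW := by
  have hs0 : 0 ≤ 1 - δ₀ := by linarith
  have hs : Real.sqrt (1 - δ₀) < 1 := by
    have := Real.sqrt_lt_sqrt hs0 (show 1 - δ₀ < 1 by linarith)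
    simpa using this
  have hsnn : 0 ≤ Real.sqrt (1 - δ₀) := Real.sqrt_nonneg _
  have hssq : Real.sqrt (1 - δ₀) ^ 2 = 1 - δ₀ := Real.sq_sqrt hs0
  refine ⟨1 - Real.sqrt (1 - δ₀), by linarith, ?_⟩
  intro Cd Gu GW Eu EW hCd hGu hGW hfu hEW hcrit hEu hG
  set p : ℝ := (d:ℝ) / ((d:ℝ) - 2) with hp
  set A : ℝ := (1 - 2 / (d:ℝ)) * Cd ^ (2 * (d:ℝ) / ((d:ℝ) - 2)) with hA
  have hd3 : (3:ℝ) ≤ (d:ℝ) := by exact_mod_cast hd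
  have hp1 : 1 < p := by
    rw [hp, lt_div_iff₀ (by linarith)]; linarith
  have hApos : 0 < A := by
    apply mul_pos
    · rw [sub_pos, div_lt_one (by linarith)]; linarith
    · exact Real.rpow_pos_of_pos hCd _
  clear_value p A
  have hYpos : 0 < GW ^ 2 := by positivity
  -- key: A * (GW^2)^(p-1) = 1/(2p)
  have hkey : A * (GW ^ 2) ^ (p - 1) = 1 / (2 * p) := by
    have h2 : (1:ℝ) / 2 = A * p * (GW ^ 2) ^ (p - 1) := hcrit
    field_simp at h2 ⊢
    linarith
  have hsplitW : (GW ^ 2) ^ p = GW ^ 2 * (GW ^ 2) ^ (p - 1) := by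
    rw [Real.rpow_sub hYpos, Real.rpow_one]; field_simp
  have hEWval : EW = (p - 1) / (2 * p) * GW ^ 2 := by
    rw [hEW]
    have : A * (GW ^ 2) ^ p = GW ^ 2 * (1 / (2 * p)) := by
      rw [hsplitW]; rw [← hkey]; ring
    rw [this]; field_simp
  have hc : 0 < (p - 1) / (2 * p) := div_pos (by linarith) (by linarith)
  -- lower bound for f(Gu^2)
  have hy2 : Gu ^ 2 ≤ GW ^ 2 := by nlinarith
  have hlow : (p - 1) / (2 * p) * Gu ^ 2 ≤ Eu := by
    rcases eq_or_lt_of_le hGu with h0 | h0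
    · have : Gu = 0 := h0.symm
      rw [this] at hfu ⊢
      simp only [ne_eq, zero_pow, OfNat.ofNat_ne_zero, not_false_iff] at hfu
      rw [Real.zero_rpow (by linarith : p ≠ 0)] at hfu
      simpa using hfu
    · have hy : 0 < Gu ^ 2 := by positivity
      have hsplit : (Gu ^ 2) ^ p = Gu ^ 2 * (Gu ^ 2) ^ (p - 1) := by
        rw [Real.rpow_sub hy, Real.rpow_one]; field_simp
      have hmono : (Gu ^ 2) ^ (p - 1) ≤ (GW ^ 2) ^ (p - 1) :=
        Real.rpow_le_rpow (by positivity) hy2 (by linarith)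
      have hAy : A * (Gu ^ 2) ^ p ≤ Gu ^ 2 * (1 / (2 * p)) := by
        rw [hsplit, ← hkey]
        have := mul_le_mul_of_nonneg_left hmono (le_of_lt hApos)
        nlinarith
      have : Gu ^ 2 / 2 - Gu ^ 2 * (1 / (2 * p)) ≤ Eu := by
        have h1 : Gu ^ 2 / 2 - A * (Gu ^ 2) ^ p ≤ Eu := hfu
        linarith
      have heq : Gu ^ 2 / 2 - Gu ^ 2 * (1 / (2 * p)) = (p - 1) / (2 * p) * Gu ^ 2 := by
        field_simp
      rw [heq] at this; exact this
  have hEu0 : 0 ≤ Eu := le_trans (mul_nonneg hc.le (sq_nonneg _)) hlow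
  refine ⟨hEu0, ?_⟩
  -- Gu^2 ≤ (1-δ₀) GW^2
  have hq : Gu ^ 2 ≤ (1 - δ₀) * GW ^ 2 := by
    have hEuup : Eu ≤ (1 - δ₀) * ((p - 1) / (2 * p) * GW ^ 2) := by
      rw [← hEWval]; exact hEu
    have h2 := le_trans hlow hEuup
    have h3 : (p - 1) / (2 * p) * Gu ^ 2 ≤ (p - 1) / (2 * p) * ((1 - δ₀) * GW ^ 2) := by
      calc (p - 1) / (2 * p) * Gu ^ 2 ≤ (1 - δ₀) * ((p - 1) / (2 * p) * GW ^ 2) := h2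
        _ = (p - 1) / (2 * p) * ((1 - δ₀) * GW ^ 2) := by ring
    exact le_of_mul_le_mul_left h3 hc
  have : Gu ≤ Real.sqrt (1 - δ₀) * GW := by
    have h1 : Gu = Real.sqrt (Gu ^ 2) := (Real.sqrt_sq hGu).symm
    rw [h1]
    calc Real.sqrt (Gu ^ 2) ≤ Real.sqrt ((1 - δ₀) * GW ^ 2) := Real.sqrt_le_sqrt hq
      _ = Real.sqrt (1 - δ₀) * GW := by rw [Real.sqrt_mul hs0, Real.sqrt_sq hGW.le]
  simpa [sub_mul] using this
end

section
/- One-variable trapping lemma, second part: with f(y) = y/2 − c·y^{d/(d−2)}, c > 0, d ≥ 3, y* the positive critical point and E* = f(y*): if y ≥ y* and f(y) ≤ (1−δ₀)E* for some δ₀ ∈ (0,1], then there exists δ₂ > 0 depending only on δ₀, d with y ≥ (1+δ₂)² y*, and moreover y/2 − (d/(d−2))·c·y^{d/(d−2)} ≤ −δ₀ E*. -/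
set_option maxHeartbeats 1000000


/-- One-variable trapping lemma, second part: with `f(y) = y/2 − c y^p`,
`p = d/(d−2)`, `y* = (1/(2cp))^{1/(p−1)}` and `E* = f(y*)`: if `y ≥ y*` and
`f(y) ≤ (1−δ₀)E*`, then `y ≥ (1+δ₂)² y*` for some `δ₂ > 0` depending only on
`δ₀` and `d`, and moreover `y/2 − p c y^p ≤ −δ₀ E*`. -/
theorem one_variable_trapping_second (d : ℕ) (hd : 3 ≤ d) (δ₀ : ℝ) (hδ₀ : 0 < δ₀)
    (hδ₀' : δ₀ ≤ 1) :
    ∃ δ₂ > (0:ℝ), ∀ c y : ℝ, 0 < c →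
      (1 / (2 * c * ((d:ℝ) / ((d:ℝ) - 2)))) ^ ((1:ℝ) / ((d:ℝ) / ((d:ℝ) - 2) - 1)) ≤ y →
      (y / 2 - c * y ^ ((d:ℝ) / ((d:ℝ) - 2)) ≤ (1 - δ₀) *
        ((1 / (2 * c * ((d:ℝ) / ((d:ℝ) - 2)))) ^ ((1:ℝ) / ((d:ℝ) / ((d:ℝ) - 2) - 1)) / 2
          - c * ((1 / (2 * c * ((d:ℝ) / ((d:ℝ) - 2)))) ^ ((1:ℝ) / ((d:ℝ) / ((d:ℝ) - 2) - 1)))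
              ^ ((d:ℝ) / ((d:ℝ) - 2)))) →
      ((1 + δ₂) ^ 2 *
          (1 / (2 * c * ((d:ℝ) / ((d:ℝ) - 2)))) ^ ((1:ℝ) / ((d:ℝ) / ((d:ℝ) - 2) - 1)) ≤ y)
        ∧ y / 2 - ((d:ℝ) / ((d:ℝ) - 2)) * c * y ^ ((d:ℝ) / ((d:ℝ) - 2))
            ≤ -δ₀ *
              ((1 / (2 * c * ((d:ℝ) / ((d:ℝ) - 2)))) ^ ((1:ℝ) / ((d:ℝ) / ((d:ℝ) - 2) - 1)) / 2
                - c * ((1 / (2 * c * ((d:ℝ) / ((d:ℝ) - 2)))) ^ ((1:ℝ) / ((d:ℝ) / ((d:ℝ) - 2) - 1)))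
                    ^ ((d:ℝ) / ((d:ℝ) - 2))) := by
  set p : ℝ := (d:ℝ) / ((d:ℝ) - 2) with hpdef
  clear_value p
  have hD : (3:ℝ) ≤ (d:ℝ) := by exact_mod_cast hd
  have hD2 : (0:ℝ) < (d:ℝ) - 2 := by linarith
  have hp : 1 < p := by
    rw [hpdef, lt_div_iff₀ hD2]; linarith
  have hp3 : p ≤ 3 := by
    rw [hpdef, div_le_iff₀ hD2]; linarith
  have hp0 : 0 < p := by linarith
  have hpm : 0 < p - 1 := by linarith
  set ε : ℝ := min 1 (δ₀ * (p - 1) / 7) with hεdef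
  clear_value ε
  have hε : 0 < ε := by rw [hεdef]; exact lt_min one_pos (by positivity)
  have hε1 : ε ≤ 1 := by rw [hεdef]; exact min_le_left _ _
  refine ⟨ε / 3, by positivity, ?_⟩
  intro c y hc hy hf
  set Y : ℝ := (1 / (2 * c * p)) ^ ((1:ℝ) / (p - 1)) with hYdef
  clear_value Y
  have hbase : (0:ℝ) < 1 / (2 * c * p) := by positivity
  have hYpos : 0 < Y := by rw [hYdef]; exact Real.rpow_pos_of_pos hbase _
  have hypos : 0 < y := lt_of_lt_of_le hYpos hy
  -- key identity : c * Y ^ p = Y / (2 * p)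
  have hYp1 : Y ^ (p - 1) = 1 / (2 * c * p) := by
    rw [hYdef, ← Real.rpow_mul hbase.le,
      one_div_mul_cancel (by linarith : p - 1 ≠ 0), Real.rpow_one]
  have hYsplit : Y ^ p = Y ^ (1:ℝ) * Y ^ (p - 1) := by
    rw [← Real.rpow_add hYpos]; ring_nf
  have hkey : c * Y ^ p = Y / (2 * p) := by
    rw [hYsplit, hYp1, Real.rpow_one]
    field_simp
  have hyp_pow : Y ^ p ≤ y ^ p := Real.rpow_le_rpow hYpos.le hy hp0.le
  -- second conclusion
  have hA : Y / (2 * p) ≤ c * y ^ p := by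
    rw [← hkey]; exact mul_le_mul_of_nonneg_left hyp_pow hc.le
  have part2 : y / 2 - p * c * y ^ p ≤ -δ₀ * (Y / 2 - c * Y ^ p) := by
    have h1 := mul_le_mul_of_nonneg_left hA hpm.le
    rw [hkey] at hf ⊢
    have hE : Y / 2 - Y / (2 * p) = (p - 1) * (Y / (2 * p)) := by
      field_simp
    rw [hE] at hf ⊢
    nlinarith [h1]
  -- first conclusion
  set t : ℝ := y / Y with htdef
  clear_value t
  have ht1 : 1 ≤ t := by rw [htdef]; exact (one_le_div hYpos).mpr hy
  have hty : y = t * Y := by rw [htdef]; field_simp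
  have hyrp : y ^ p = t ^ p * Y ^ p := by
    rw [hty, Real.mul_rpow (by linarith : (0:ℝ) ≤ t) hYpos.le]
  have hcy : c * y ^ p = t ^ p * (Y / (2 * p)) := by
    rw [hyrp, ← hkey]; ring
  have hf4 : (Y / (2 * p)) * (p * t - t ^ p) ≤ (Y / (2 * p)) * ((1 - δ₀) * (p - 1)) := by
    calc (Y / (2 * p)) * (p * t - t ^ p) = t * Y / 2 - t ^ p * (Y / (2 * p)) := by
          field_simp
      _ = y / 2 - c * y ^ p := by rw [hcy, ← hty]
      _ ≤ (1 - δ₀) * (Y / 2 - c * Y ^ p) := hf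
      _ = (Y / (2 * p)) * ((1 - δ₀) * (p - 1)) := by rw [hkey]; field_simp
  have hf3 : p * t - t ^ p ≤ (1 - δ₀) * (p - 1) :=
    le_of_mul_le_mul_left (by rwa [mul_comm (Y / (2*p)) _, mul_comm (Y / (2*p)) _] at hf4)
      (by positivity)
  have htε : 1 + ε ≤ t := by
    rcases le_or_gt 2 t with h2 | h2
    · linarith
    · have ht3 : t ^ p ≤ t * t * t := by
        calc t ^ p ≤ t ^ (3:ℝ) := Real.rpow_le_rpow_of_exponent_le ht1 hp3
          _ = t ^ (3:ℕ) := by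
              rw [show (3:ℝ) = ((3:ℕ):ℝ) by norm_num, Real.rpow_natCast]
          _ = t * t * t := by ring
      have h7 : t * t * t - 1 ≤ 7 * (t - 1) := by
        nlinarith [mul_nonneg (mul_nonneg (sub_nonneg.2 ht1) (by linarith : (0:ℝ) ≤ 2 - t))
          (by linarith : (0:ℝ) ≤ t + 3)]
      have hstep : 1 + δ₀ * (p - 1) / 7 ≤ t := by
        nlinarith [hf3, ht3, h7, mul_nonneg hp0.le (sub_nonneg.2 ht1)]
      have hεle : ε ≤ δ₀ * (p - 1) / 7 := by rw [hεdef]; exact min_le_right _ _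
      linarith
  have hsq : (1 + ε / 3) ^ 2 ≤ 1 + ε := by nlinarith
  have part1 : (1 + ε / 3) ^ 2 * Y ≤ y := by
    calc (1 + ε / 3) ^ 2 * Y ≤ (1 + ε) * Y := by
          exact mul_le_mul_of_nonneg_right hsq hYpos.le
      _ ≤ t * Y := mul_le_mul_of_nonneg_right htε hYpos.le
      _ = y := hty.symm
  exact ⟨part1, part2⟩
end

section
/- If E(u₀) < E_Δ(W) and ‖∇u₀‖_{L²} ≤ ‖∇W‖_{L²}, then ‖u₀‖_Σ ≤ ‖∇W‖_{L²}, where ‖u‖_Σ² = ‖∇u‖²_{L²} + ‖xu‖²_{L²}. The key inequality: ‖u₀‖_Σ² + (1 − 2/d)(‖W‖^{2d/(d−2)}_{2d/(d−2)} − ‖u₀‖^{2d/(d−2)}_{2d/(d−2)}) ≤ ‖∇W‖²_{L²}, with the bracketed difference nonnegative by the variational characterization of W. -/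
/-- If `E(u₀) < E_Δ(W)` and `‖∇u₀‖₂ ≤ ‖∇W‖₂`, then `‖u₀‖_Σ ≤ ‖∇W‖₂`. Abstract
reals: `Su = ‖u₀‖_Σ`, `Gu = ‖∇u₀‖₂`, `GW = ‖∇W‖₂`, `nU = ‖u₀‖_q^q`,
`nW = ‖W‖_q^q` with `q = 2d/(d−2)`; the sharp Sobolev inequality (with `W` an
extremizer) is assumed. The conclusion includes the key inequality
`‖u₀‖_Σ² + (1−2/d)(‖W‖_q^q − ‖u₀‖_q^q) ≤ ‖∇W‖₂²` with nonnegative bracket. -/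
theorem sigma_norm_trapping (d : ℕ) (hd : 3 ≤ d) (Cd Su Gu GW nU nW : ℝ)
    (hCd : 0 < Cd) (hSu : 0 ≤ Su) (hGu : 0 ≤ Gu) (hGW : 0 < GW)
    (hGuSu : Gu ≤ Su)
    (hSobU : nU ≤ Cd ^ (2 * (d:ℝ) / ((d:ℝ) - 2)) * Gu ^ (2 * (d:ℝ) / ((d:ℝ) - 2)))
    (hSobW : nW = Cd ^ (2 * (d:ℝ) / ((d:ℝ) - 2)) * GW ^ (2 * (d:ℝ) / ((d:ℝ) - 2)))
    (hE : Su ^ 2 / 2 - (1 - 2 / (d:ℝ)) * nU < GW ^ 2 / 2 - (1 - 2 / (d:ℝ)) * nW)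
    (hG : Gu ≤ GW) :
    0 ≤ nW - nU ∧ Su ^ 2 + (1 - 2 / (d:ℝ)) * (nW - nU) ≤ GW ^ 2 ∧ Su ≤ GW := by
  have hd3 : (3:ℝ) ≤ (d:ℝ) := by exact_mod_cast hd
  set e : ℝ := 2 * (d:ℝ) / ((d:ℝ) - 2) with he
  have he0 : 0 ≤ e := by
    apply div_nonneg <;> linarith
  have hpow : Gu ^ e ≤ GW ^ e := Real.rpow_le_rpow hGu hG he0
  have hnWU : nU ≤ nW := by
    rw [hSobW]
    calc nU ≤ Cd ^ e * Gu ^ e := hSobU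
    _ ≤ Cd ^ e * GW ^ e := by
        apply mul_le_mul_of_nonneg_left hpow (Real.rpow_nonneg hCd.le _)
  have hc : 0 ≤ 1 - 2 / (d:ℝ) := by
    have : 2 / (d:ℝ) ≤ 2 / 3 := by
      apply div_le_div_of_nonneg_left (by norm_num) (by norm_num) hd3
    linarith
  have hkey : Su ^ 2 + (1 - 2 / (d:ℝ)) * (nW - nU) ≤ GW ^ 2 := by
    nlinarith [mul_nonneg hc (sub_nonneg.2 hnWU)]
  refine ⟨sub_nonneg.2 hnWU, hkey, ?_⟩
  nlinarith [mul_nonneg hc (sub_nonneg.2 hnWU)]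
end
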